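/- Let w be a weight with BOPS (φ_n, φ̄_n) and let α* ∈ ℂ∖{0} be such that φ*_n(α*) ≠ 0 for all n ≥ 0. Let (Φ_n, Φ̄_n) be a BOPS for the modified weight ζ ↦ (1−α* ζ^(−1))·w(ζ), with leading coefficients κ⁺_n and coefficients r⁺_n := Φ_n(0)/κ⁺_n, r̄⁺_n := Φ̄_n(0)/κ⁺_n. Then for all n ≥ 0: (κ⁺_n)² = κ_(n+1) κ_n φ*_n(α*)/φ*_(n+1)(α*); r⁺_n = φ_n(α*)/φ*_n(α*); and r̄⁺_n = (φ̄_n(0) φ*_(n+1)(α*) − φ̄_(n+1)(0) α* φ*_n(α*))/(κ_(n+1) φ*_n(α*)). -/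

import Mathlib

open Polynomial Matrix Filter

noncomputable section

/-- `(1/(2πi)) ∮_𝕋 f(ζ) dζ/ζ`, written as `(1/(2π)) ∫_0^{2π} f(e^{iθ}) dθ`. -/
def circleAvg (f : ℂ → ℂ) : ℂ :=
  (2 * Real.pi : ℂ)⁻¹ * ∫ θ in (0:ℝ)..(2 * Real.pi), f (Complex.exp (θ * Complex.I))

/-- Fourier coefficient `w_k` of a weight `w` on the unit circle. -/
def fCoeff (w : ℂ → ℂ) (k : ℤ) : ℂ := circleAvg fun ζ => w ζ * ζ ^ (-k)

/-- Toeplitz determinant `I_n[w] = det (w_{j-k})_{j,k=0..n-1}`. -/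
def toeplitzDet (w : ℂ → ℂ) (n : ℕ) : ℂ :=
  (Matrix.of fun j k : Fin n => fCoeff w ((j : ℤ) - (k : ℤ))).det

/-- The Carathéodory function `F(z)`. -/
def cara (w : ℂ → ℂ) (z : ℂ) : ℂ := circleAvg fun ζ => (ζ + z) / (ζ - z) * w ζ

/-- A bi-orthogonal polynomial system (BOPS) on the unit circle for the weight `w`:
polynomials `φ_n`, `φ̄_n` of exact degree `n` with common leading coefficient `κ_n ≠ 0`,
bi-orthonormal with respect to `w`. -/
structure BOPS (w : ℂ → ℂ) where
  φ : ℕ → Polynomial ℂ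
  φb : ℕ → Polynomial ℂ
  κ : ℕ → ℂ
  κ_ne : ∀ n, κ n ≠ 0
  degφ : ∀ n, (φ n).degree ≤ n
  degφb : ∀ n, (φb n).degree ≤ n
  leadφ : ∀ n, (φ n).coeff n = κ n
  leadφb : ∀ n, (φb n).coeff n = κ n
  orth : ∀ m n, circleAvg (fun ζ => w ζ * (φ m).eval ζ * (φb n).eval ζ⁻¹)
      = if m = n then 1 else 0

namespace BOPS

variable {w : ℂ → ℂ}

/-- The reciprocal polynomial `φ*_n(z) = z^n φ̄_n(1/z)`. -/
def φs (S : BOPS w) (n : ℕ) : Polynomial ℂ := (S.φb n).reflect n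

/-- `r_n = φ_n(0)/κ_n`. -/
def r (S : BOPS w) (n : ℕ) : ℂ := (S.φ n).eval 0 / S.κ n

/-- `r̄_n = φ̄_n(0)/κ_n`. -/
def rb (S : BOPS w) (n : ℕ) : ℂ := (S.φb n).eval 0 / S.κ n

/-- Associated function `ξ_n`. -/
def ξ (S : BOPS w) : ℕ → ℂ → ℂ
  | 0, z => S.κ 0 * (fCoeff w 0 + cara w z)
  | n + 1, z => circleAvg fun ζ => (ζ + z) / (ζ - z) * w ζ * (S.φ (n + 1)).eval ζ

/-- Associated function `ξ*_n`. -/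
def ξs (S : BOPS w) : ℕ → ℂ → ℂ
  | 0, z => S.κ 0 * (fCoeff w 0 - cara w z)
  | n + 1, z =>
      -z ^ (n + 1) * circleAvg fun ζ => (ζ + z) / (ζ - z) * w ζ * (S.φb (n + 1)).eval ζ⁻¹

end BOPS

/-- A square matrix of size `K+1` built from a distinguished first row and `K` further rows. -/
def rowMat {K : ℕ} (top : Fin (K + 1) → ℂ) (rest : Fin K → Fin (K + 1) → ℂ) :
    Matrix (Fin (K + 1)) (Fin (K + 1)) ℂ :=
  Matrix.of fun i j => Fin.cases (top j) (fun r => rest r j) i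

end

/-!
Write `⟨p, q⟩_v` for the pairing `(1/2πi) ∮ v(ζ) p(ζ) q(1/ζ) dζ/ζ` (`circlePairing`). Two identities
carry the argument. First, `⟨p, q⟩_{(1 - α/ζ) w} = ⟨(X - α) p, X q⟩_w`. Second, the reproducing
property `⟨φ*_N, q⟩_w = q(0)/κ_N` for `deg q ≤ N`, which after expanding `φ*_N` in the basis `φ_j`
is the Christoffel–Darboux formula `κ_N φ*_N = ∑_{j ≤ N} φ̄_j(0) φ_j`.

By the first identity, `(X - α) Φ_n - (κ⁺_n/κ_n) X φ_n` has degree `≤ n` and is `w`-orthogonal to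
`X q` for `deg q < n`, hence is a multiple of `φ*_n`; evaluating at `0` and `α` gives `r⁺_n`.
Dividing `φ_{n+1}`, `φ*_{n+1}` and `φ*_n` by `X - α` and pairing them with `X Φ̄_n` gives three
linear relations in the single unknown `⟨1, X Φ̄_n⟩_w`; eliminating it yields `κ⁺_n` and `r̄⁺_n`.
-/

open Metric

section PolynomialFacts

variable {K : Type*} [Field K]

theorem eval_reflect_of_degree_le {p : K[X]} {N : ℕ} (hp : p.degree ≤ N) {z : K} (hz : z ≠ 0) :
    (p.reflect N).eval z = z ^ N * p.eval z⁻¹ := by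
  let := invertibleOfNonzero (inv_ne_zero hz)
  have h := eval₂_reflect_mul_pow (RingHom.id K) z⁻¹ N p (natDegree_le_iff_degree_le.2 hp)
  rw [invOf_eq_inv, inv_inv, inv_pow, eval₂_id, eval₂_id] at h
  rw [← h, mul_comm, inv_mul_cancel_right₀ (pow_ne_zero _ hz)]

theorem degree_reflect_le_of_degree_le {p : K[X]} {N : ℕ} (hp : p.degree ≤ N) :
    (p.reflect N).degree ≤ N :=
  natDegree_le_iff_degree_le.1 <| natDegree_reflect_le.trans <|
    max_le le_rfl (natDegree_le_iff_degree_le.2 hp)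

theorem degree_le_of_degree_le_succ_of_coeff_eq_zero {p : K[X]} {n : ℕ}
    (hp : p.degree ≤ ↑(n + 1)) (h : p.coeff (n + 1) = 0) : p.degree ≤ n := by
  rw [degree_le_iff_coeff_zero] at hp ⊢
  intro m hm
  rcases eq_or_ne m (n + 1) with rfl | hne
  · exact h
  · exact hp m (by norm_cast at hm ⊢; omega)

theorem degree_mul_le_succ {q p : K[X]} {n : ℕ} (hq : q.degree ≤ 1) (hp : p.degree ≤ n) :
    (q * p).degree ≤ ↑(n + 1) := by
  rw [Nat.cast_succ, add_comm]
  exact degree_mul_le_of_le hq hp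

theorem exists_eq_C_eval_add_X_sub_C_mul {p : K[X]} {n : ℕ} (a : K) (hp : p.degree ≤ ↑(n + 1)) :
    ∃ q : K[X], q.degree ≤ n ∧ q.coeff n = p.coeff (n + 1) ∧ p = C (p.eval a) + (X - C a) * q := by
  set q := p /ₘ (X - C a)
  have hpq : p = C (p.eval a) + (X - C a) * q := by
    rw [← modByMonic_X_sub_C_eq_C_eval, modByMonic_add_div]
  have hq : q.degree ≤ n := by
    rw [← natDegree_le_iff_degree_le, natDegree_divByMonic _ (monic_X_sub_C a), natDegree_X_sub_C]
    have := natDegree_le_iff_degree_le.2 hp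
    omega
  refine ⟨q, hq, ?_, hpq⟩
  have h := congrArg (coeff · (n + 1)) hpq
  simp only [coeff_add, coeff_C_succ, coeff_X_sub_C_mul, zero_add,
    coeff_eq_zero_of_degree_lt (hq.trans_lt (by exact_mod_cast n.lt_succ_self)), mul_zero,
    sub_zero] at h
  exact h.symm

end PolynomialFacts

section Biorthogonal

variable {K : Type*} [Field K] (B : K[X] →ₗ[K] K[X] →ₗ[K] K) {φ ψ : ℕ → K[X]} {κ : ℕ → K}

theorem eq_sum_smul_of_biorthogonal (hκ : ∀ n, κ n ≠ 0) (hdeg : ∀ n, (φ n).degree ≤ n)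
    (hlead : ∀ n, (φ n).coeff n = κ n) (horth : ∀ m n, B (φ m) (ψ n) = if m = n then 1 else 0)
    {p : K[X]} {N : ℕ} (hp : p.degree ≤ N) :
    p = ∑ k ∈ Finset.range (N + 1), B p (ψ k) • φ k := by
  have hcoeff : ∀ n, (φ n).coeff n ≠ 0 := fun n => hlead n ▸ hκ n
  let S : Polynomial.Sequence K :=
    ⟨φ, fun n => degree_eq_of_le_of_coeff_ne_zero (hdeg n) (hcoeff n)⟩
  have hspan : p ∈ Submodule.span K (S '' Set.Iic N) := by
    rw [S.span_degreeLE fun i _ => ?_]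
    · exact mem_degreeLE.2 hp
    · rw [leadingCoeff, S.natDegree_eq]
      exact (hcoeff i).isUnit
  clear hp
  induction hspan using Submodule.span_induction with
  | mem q hq =>
    obtain ⟨j, hj, rfl⟩ := hq
    have hj' : j ∈ Finset.range (N + 1) := Finset.mem_range.2 (Nat.lt_succ_of_le hj)
    simp [S, horth, hj']
  | zero => simp
  | add p q _ _ hp hq =>
    simp only [map_add, LinearMap.add_apply, add_smul, Finset.sum_add_distrib, ← hp, ← hq]
  | smul a p _ hp =>
    simp only [map_smul, LinearMap.smul_apply, smul_eq_mul, mul_smul, ← Finset.smul_sum, ← hp]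

theorem apply_eq_coeff_div_of_biorthogonal (hκ : ∀ n, κ n ≠ 0) (hdeg : ∀ n, (φ n).degree ≤ n)
    (hlead : ∀ n, (φ n).coeff n = κ n) (horth : ∀ m n, B (φ m) (ψ n) = if m = n then 1 else 0)
    {p : K[X]} {N : ℕ} (hp : p.degree ≤ N) :
    B p (ψ N) = p.coeff N / κ N := by
  have h := congrArg (coeff · N) (eq_sum_smul_of_biorthogonal B hκ hdeg hlead horth hp)
  simp only [finsetSum_coeff, coeff_smul, smul_eq_mul] at h
  rw [Finset.sum_eq_single_of_mem N (Finset.self_mem_range_succ N) fun k hk hkN =>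
    by rw [coeff_eq_zero_of_degree_lt ((hdeg k).trans_lt (by
      exact_mod_cast lt_of_le_of_ne (Nat.lt_succ_iff.1 (Finset.mem_range.1 hk)) hkN)), mul_zero],
    hlead] at h
  rw [h, mul_div_cancel_right₀ _ (hκ N)]

end Biorthogonal

theorem circleAvg_eq_circleAverage (f : ℂ → ℂ) : circleAvg f = Real.circleAverage f 0 1 := by
  simp [circleAvg, Real.circleAverage_def, circleMap, Complex.real_smul]

theorem circleAvg_congr_sphere {f g : ℂ → ℂ} (h : Set.EqOn f g (sphere 0 1)) :
    circleAvg f = circleAvg g := by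
  rw [circleAvg_eq_circleAverage, circleAvg_eq_circleAverage]
  exact Real.circleAverage_congr_sphere (by rwa [abs_one])

noncomputable def circlePairing (v : ℂ → ℂ) (p q : ℂ[X]) : ℂ :=
  circleAvg fun ζ => v ζ * p.eval ζ * q.eval ζ⁻¹

section CirclePairing

variable {v : ℂ → ℂ}

theorem circlePairing_smul_left (a : ℂ) (p q : ℂ[X]) :
    circlePairing v (a • p) q = a * circlePairing v p q := by
  simp only [circlePairing, circleAvg_eq_circleAverage, ← smul_eq_mul (a := a),
    ← Real.circleAverage_fun_smul]
  congr 1; ext ζ; simp only [eval_smul, smul_eq_mul]; ring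

theorem circlePairing_smul_right (a : ℂ) (p q : ℂ[X]) :
    circlePairing v p (a • q) = a * circlePairing v p q := by
  simp only [circlePairing, circleAvg_eq_circleAverage, ← smul_eq_mul (a := a),
    ← Real.circleAverage_fun_smul]
  congr 1; ext ζ; simp only [eval_smul, smul_eq_mul]; ring

theorem circlePairing_X_mul_X_mul (p q : ℂ[X]) :
    circlePairing v (X * p) (X * q) = circlePairing v p q :=
  circleAvg_congr_sphere fun ζ hζ => by
    have : ζ ≠ 0 := ne_zero_of_mem_sphere one_ne_zero ⟨ζ, hζ⟩
    simp only [eval_mul, eval_X]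
    field_simp

theorem circleIntegrable_pairing (hv : ContinuousOn v (sphere 0 1)) (p q : ℂ[X]) :
    CircleIntegrable (fun ζ => v ζ * p.eval ζ * q.eval ζ⁻¹) 0 1 :=
  ContinuousOn.circleIntegrable zero_le_one <| (hv.mul p.continuous.continuousOn).mul
    (q.continuous.comp_continuousOn
      (continuousOn_inv₀.mono fun ζ hζ => ne_zero_of_mem_sphere one_ne_zero ⟨ζ, hζ⟩))

theorem circlePairing_add_left (hv : ContinuousOn v (sphere 0 1)) (p₁ p₂ q : ℂ[X]) :
    circlePairing v (p₁ + p₂) q = circlePairing v p₁ q + circlePairing v p₂ q := by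
  simp only [circlePairing, circleAvg_eq_circleAverage, ← Real.circleAverage_fun_add
    (circleIntegrable_pairing hv p₁ q) (circleIntegrable_pairing hv p₂ q)]
  congr 1; ext ζ; simp only [eval_add]; ring

theorem circlePairing_add_right (hv : ContinuousOn v (sphere 0 1)) (p q₁ q₂ : ℂ[X]) :
    circlePairing v p (q₁ + q₂) = circlePairing v p q₁ + circlePairing v p q₂ := by
  simp only [circlePairing, circleAvg_eq_circleAverage, ← Real.circleAverage_fun_add
    (circleIntegrable_pairing hv p q₁) (circleIntegrable_pairing hv p q₂)]
  congr 1; ext ζ; simp only [eval_add]; ring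

noncomputable def circlePairingₗ (hv : ContinuousOn v (sphere 0 1)) : ℂ[X] →ₗ[ℂ] ℂ[X] →ₗ[ℂ] ℂ :=
  LinearMap.mk₂ ℂ (circlePairing v) (circlePairing_add_left hv) circlePairing_smul_left
    (circlePairing_add_right hv) circlePairing_smul_right

end CirclePairing

namespace BOPS

variable {v : ℂ → ℂ} (U : BOPS v)

theorem φb_ne_zero (n : ℕ) : U.φb n ≠ 0 := fun h => U.κ_ne n (by rw [← U.leadφb, h, coeff_zero])

theorem degree_φs_le (n : ℕ) : (U.φs n).degree ≤ n := degree_reflect_le_of_degree_le (U.degφb n)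

theorem coeff_φs_self (n : ℕ) : (U.φs n).coeff n = (U.φb n).eval 0 := by
  rw [φs, coeff_reflect, revAt_le le_rfl, Nat.sub_self, coeff_zero_eq_eval_zero]

theorem eval_φs_zero (n : ℕ) : (U.φs n).eval 0 = U.κ n := by
  rw [← coeff_zero_eq_eval_zero, φs, coeff_reflect, revAt_zero, U.leadφb]

theorem eq_sum_smul_φ (hv : ContinuousOn v (sphere 0 1)) {p : ℂ[X]} {N : ℕ} (hp : p.degree ≤ N) :
    p = ∑ k ∈ Finset.range (N + 1), circlePairing v p (U.φb k) • U.φ k :=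
  eq_sum_smul_of_biorthogonal (circlePairingₗ hv) U.κ_ne U.degφ U.leadφ U.orth hp

theorem circlePairing_φb (hv : ContinuousOn v (sphere 0 1)) {p : ℂ[X]} {N : ℕ}
    (hp : p.degree ≤ N) : circlePairing v p (U.φb N) = p.coeff N / U.κ N :=
  apply_eq_coeff_div_of_biorthogonal (circlePairingₗ hv) U.κ_ne U.degφ U.leadφ U.orth hp

theorem circlePairing_φ (hv : ContinuousOn v (sphere 0 1)) {q : ℂ[X]} {N : ℕ}
    (hq : q.degree ≤ N) : circlePairing v (U.φ N) q = q.coeff N / U.κ N :=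
  apply_eq_coeff_div_of_biorthogonal (circlePairingₗ hv).flip U.κ_ne U.degφb U.leadφb
    (fun m n => (U.orth n m).trans (by simp only [eq_comm])) hq

-- Moving `ζ ^ N` from `φ̄_N(1/ζ)` onto `q(1/ζ)` turns the pairing into `⟨q*, φ̄_N⟩`.
theorem circlePairing_φs (hv : ContinuousOn v (sphere 0 1)) {q : ℂ[X]} {N : ℕ}
    (hq : q.degree ≤ N) : circlePairing v (U.φs N) q = q.eval 0 / U.κ N := by
  have hswap : circlePairing v (U.φs N) q = circlePairing v (q.reflect N) (U.φb N) :=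
    circleAvg_congr_sphere fun ζ hζ => by
      have hζ0 : ζ ≠ 0 := ne_zero_of_mem_sphere one_ne_zero ⟨ζ, hζ⟩
      simp only [φs, eval_reflect_of_degree_le (U.degφb N) hζ0, eval_reflect_of_degree_le hq hζ0]
      ring
  rw [hswap, U.circlePairing_φb hv (degree_reflect_le_of_degree_le hq), coeff_reflect,
    revAt_le le_rfl, Nat.sub_self, coeff_zero_eq_eval_zero]

theorem κ_smul_φs (hv : ContinuousOn v (sphere 0 1)) (N : ℕ) :
    U.κ N • U.φs N = ∑ j ∈ Finset.range (N + 1), (U.φb j).eval 0 • U.φ j := by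
  conv_lhs => rw [U.eq_sum_smul_φ hv (U.degree_φs_le N)]
  rw [Finset.smul_sum]
  refine Finset.sum_congr rfl fun j hj => ?_
  rw [U.circlePairing_φs hv ((U.degφb j).trans (by exact_mod_cast Finset.mem_range_succ_iff.1 hj)),
    smul_smul, mul_div_cancel₀ _ (U.κ_ne N)]

theorem κ_smul_φs_succ (hv : ContinuousOn v (sphere 0 1)) (n : ℕ) :
    U.κ (n + 1) • U.φs (n + 1) = U.κ n • U.φs n + (U.φb (n + 1)).eval 0 • U.φ (n + 1) := by
  rw [U.κ_smul_φs hv, U.κ_smul_φs hv, Finset.sum_range_succ]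

theorem eq_smul_φs_of_circlePairing_X_mul (hv : ContinuousOn v (sphere 0 1)) {p : ℂ[X]} {n : ℕ}
    (hp : p.degree ≤ n) (horth : ∀ q : ℂ[X], q.degree < n → circlePairing v p (X * q) = 0) :
    p = (circlePairing v p 1 * U.κ n) • U.φs n := by
  have hcoeff : ∀ j ∈ Finset.range (n + 1),
      circlePairing v p (U.φb j) = circlePairing v p 1 * (U.φb j).eval 0 := fun j hj => by
    have hdivX : (U.φb j).divX.degree < n :=
      (degree_divX_lt (U.φb_ne_zero j)).trans_le
        ((U.degφb j).trans (by exact_mod_cast Finset.mem_range_succ_iff.1 hj))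
    conv_lhs => rw [← X_mul_divX_add (U.φb j), ← mul_one (C _), ← smul_eq_C_mul]
    rw [circlePairing_add_right hv, horth _ hdivX, circlePairing_smul_right,
      coeff_zero_eq_eval_zero, zero_add, mul_comm]
  rw [mul_smul, U.κ_smul_φs hv, Finset.smul_sum]
  conv_lhs => rw [U.eq_sum_smul_φ hv hp]
  exact Finset.sum_congr rfl fun j hj => by rw [hcoeff j hj, mul_smul]

end BOPS

section Christoffel

variable {w : ℂ → ℂ} (α : ℂ)

theorem continuousOn_christoffel (hw : ContinuousOn w (sphere 0 1)) :
    ContinuousOn (fun ζ => (1 - α * ζ⁻¹) * w ζ) (sphere 0 1) :=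
  (continuousOn_const.sub (continuousOn_const.mul (continuousOn_inv₀.mono
    fun ζ hζ => ne_zero_of_mem_sphere one_ne_zero ⟨ζ, hζ⟩))).mul hw

theorem circlePairing_christoffel (p q : ℂ[X]) :
    circlePairing (fun ζ => (1 - α * ζ⁻¹) * w ζ) p q = circlePairing w ((X - C α) * p) (X * q) :=
  circleAvg_congr_sphere fun ζ hζ => by
    have : ζ ≠ 0 := ne_zero_of_mem_sphere one_ne_zero ⟨ζ, hζ⟩
    simp only [eval_mul, eval_sub, eval_X, eval_C]
    field_simp

theorem circlePairing_eq_christoffel_add (hw : ContinuousOn w (sphere 0 1)) (p q : ℂ[X]) :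
    circlePairing w p q
      = circlePairing (fun ζ => (1 - α * ζ⁻¹) * w ζ) p q + α * circlePairing w p (X * q) := by
  rw [circlePairing_christoffel, ← circlePairing_smul_left, ← circlePairing_add_left hw,
    smul_eq_C_mul, ← add_mul, sub_add_cancel, circlePairing_X_mul_X_mul]

variable (T : BOPS (fun ζ => (1 - α * ζ⁻¹) * w ζ))

theorem circlePairing_X_mul_φb_christoffel (hw : ContinuousOn w (sphere 0 1)) {p : ℂ[X]} {n : ℕ}
    (hp : p.degree ≤ ↑(n + 1)) :
    circlePairing w p (X * T.φb n)
      = p.eval α * circlePairing w 1 (X * T.φb n) + p.coeff (n + 1) / T.κ n := by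
  obtain ⟨q, hq, hqn, hpq⟩ := exists_eq_C_eval_add_X_sub_C_mul α hp
  conv_lhs => rw [hpq, ← mul_one (C _), ← smul_eq_C_mul]
  rw [circlePairing_add_left hw, circlePairing_smul_left, ← circlePairing_christoffel,
    T.circlePairing_φb (continuousOn_christoffel α hw) hq, hqn]

theorem eval_φs_succ_mul_circlePairing_christoffel (hw : ContinuousOn w (sphere 0 1)) (S : BOPS w)
    (n : ℕ) : (S.φs (n + 1)).eval α * circlePairing w 1 (X * T.φb n) * T.κ n
      = -(S.φb (n + 1)).eval 0 := by
  have h := S.circlePairing_φs hw (degree_mul_le_succ degree_X_le (T.degφb n))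
  rw [eval_mul, eval_X, zero_mul, zero_div,
    circlePairing_X_mul_φb_christoffel α T hw (S.degree_φs_le _), S.coeff_φs_self] at h
  field_simp [T.κ_ne n] at h
  linear_combination h

theorem κ_sq_mul_eval_φs_succ_christoffel (hw : ContinuousOn w (sphere 0 1)) (S : BOPS w)
    (n : ℕ) : T.κ n ^ 2 * (S.φs (n + 1)).eval α = S.κ (n + 1) * S.κ n * (S.φs n).eval α := by
  have h := S.circlePairing_φ hw (degree_mul_le_succ degree_X_le (T.degφb n))
  rw [coeff_X_mul, T.leadφb, circlePairing_X_mul_φb_christoffel α T hw (S.degφ _), S.leadφ] at h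
  field_simp [S.κ_ne (n + 1), T.κ_ne n] at h
  have hδ := eval_φs_succ_mul_circlePairing_christoffel α T hw S n
  have hstep := congrArg (eval α) (S.κ_smul_φs_succ hw n)
  simp only [eval_add, eval_smul, smul_eq_mul] at hstep
  linear_combination -(S.φs (n + 1)).eval α * h
    + S.κ (n + 1) * (S.φ (n + 1)).eval α * hδ + S.κ (n + 1) * hstep

theorem eval_zero_φ_christoffel_mul (hw : ContinuousOn w (sphere 0 1)) (hα : α ≠ 0) (S : BOPS w)
    (n : ℕ) : (T.φ n).eval 0 * (S.φs n).eval α = (S.φ n).eval α * T.κ n := by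
  set p : ℂ[X] := (X - C α) * T.φ n - (T.κ n / S.κ n) • (X * S.φ n) with hpdef
  have hp : p.degree ≤ n := by
    refine degree_le_of_degree_le_succ_of_coeff_eq_zero ?_ ?_
    · rw [hpdef]
      exact (degree_sub_le _ _).trans (max_le (degree_mul_le_succ (degree_X_sub_C_le α) (T.degφ n))
        ((degree_smul_le _ _).trans (degree_mul_le_succ degree_X_le (S.degφ n))))
    · rw [hpdef, coeff_sub, coeff_X_sub_C_mul, coeff_smul, coeff_X_mul, T.leadφ, S.leadφ,
        coeff_eq_zero_of_degree_lt ((T.degφ n).trans_lt (by exact_mod_cast n.lt_succ_self)),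
        smul_eq_mul, div_mul_cancel₀ _ (S.κ_ne n)]
      ring
  have horth : ∀ q : ℂ[X], q.degree < n → circlePairing w p (X * q) = 0 := fun q hq => by
    have hqn : q.coeff n = 0 := coeff_eq_zero_of_degree_lt hq
    rw [hpdef, sub_eq_add_neg, ← neg_smul, circlePairing_add_left hw, circlePairing_smul_left,
      ← circlePairing_christoffel, circlePairing_X_mul_X_mul,
      T.circlePairing_φ (continuousOn_christoffel α hw) hq.le, S.circlePairing_φ hw hq.le, hqn]
    simp only [zero_div, mul_zero, add_zero]
  have hpφs := S.eq_smul_φs_of_circlePairing_X_mul hw hp horth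
  have h0 := congrArg (eval 0) hpφs
  have hα' := congrArg (eval α) hpφs
  simp only [hpdef, eval_sub, eval_mul, eval_smul, eval_X, eval_C, smul_eq_mul, zero_sub, neg_mul,
    zero_mul, mul_zero, sub_zero, sub_self, S.eval_φs_zero] at h0 hα'
  generalize circlePairing w _ 1 = c at h0 hα'
  apply mul_left_cancel₀ hα
  linear_combination -(S.φs n).eval α * h0 + S.κ n * hα'
    + α * (S.φ n).eval α * div_mul_cancel₀ (T.κ n) (S.κ_ne n)

theorem eval_zero_φb_christoffel_mul (hw : ContinuousOn w (sphere 0 1)) (S : BOPS w) (n : ℕ) :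
    (T.φb n).eval 0 * (S.κ (n + 1) * (S.φs n).eval α)
      = ((S.φb n).eval 0 * (S.φs (n + 1)).eval α
          - (S.φb (n + 1)).eval 0 * α * (S.φs n).eval α) * T.κ n := by
  have hn : (S.φs n).degree ≤ ↑(n + 1) := (S.degree_φs_le n).trans (by norm_cast; omega)
  have h := circlePairing_eq_christoffel_add α hw (S.φs n) (T.φb n)
  rw [S.circlePairing_φs hw (T.degφb n),
    T.circlePairing_φb (continuousOn_christoffel α hw) (S.degree_φs_le n), S.coeff_φs_self,
    circlePairing_X_mul_φb_christoffel α T hw hn,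
    coeff_eq_zero_of_degree_lt ((S.degree_φs_le n).trans_lt (by norm_cast; omega)), zero_div,
    add_zero] at h
  field_simp [S.κ_ne n, T.κ_ne n] at h
  have hδ := eval_φs_succ_mul_circlePairing_christoffel α T hw S n
  have hκ := κ_sq_mul_eval_φs_succ_christoffel α T hw S n
  apply mul_left_cancel₀ (T.κ_ne n)
  linear_combination S.κ (n + 1) * (S.φs n).eval α * h - (S.φb n).eval 0 * hκ
    + T.κ n ^ 2 * α * (S.φs n).eval α * hδ
    - α * (S.φs n).eval α * circlePairing w 1 (X * T.φb n) * T.κ n * hκ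

end Christoffel

theorem elementary_christoffel_conjugate_general (w : ℂ → ℂ)
    (hw : ContinuousOn w (Metric.sphere (0 : ℂ) 1))
    (S : BOPS w)
    (α : ℂ) (hα : α ≠ 0) (hφsα : ∀ n, (S.φs n).eval α ≠ 0)
    (T : BOPS (fun ζ => (1 - α * ζ⁻¹) * w ζ)) (n : ℕ) :
    (T.κ n) ^ 2 = S.κ (n + 1) * S.κ n * (S.φs n).eval α / (S.φs (n + 1)).eval α ∧
    T.r n = (S.φ n).eval α / (S.φs n).eval α ∧
    T.rb n = ((S.φb n).eval 0 * (S.φs (n + 1)).eval α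
                - (S.φb (n + 1)).eval 0 * α * (S.φs n).eval α)
              / (S.κ (n + 1) * (S.φs n).eval α) := by
  refine ⟨?_, ?_, ?_⟩
  · rw [eq_div_iff (hφsα (n + 1)), κ_sq_mul_eval_φs_succ_christoffel α T hw S n]
  · rw [BOPS.r, div_eq_div_iff (T.κ_ne n) (hφsα n)]
    exact eval_zero_φ_christoffel_mul α T hw hα S n
  · rw [BOPS.rb, div_eq_div_iff (T.κ_ne n) (mul_ne_zero (S.κ_ne (n + 1)) (hφsα n))]
    exact eval_zero_φb_christoffel_mul α T hw S n

/-- coefficients of the conjugated elementary Christoffel transformation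
`w ↦ (1 - α* ζ⁻¹) w`. -/
theorem elementary_christoffel_conjugate (w : ℂ → ℂ)
    (hw : ContinuousOn w (Metric.sphere (0 : ℂ) 1))
    (hI : ∀ n, toeplitzDet w n ≠ 0) (S : BOPS w)
    (α : ℂ) (hα : α ≠ 0) (hφsα : ∀ n, (S.φs n).eval α ≠ 0)
    (T : BOPS (fun ζ => (1 - α * ζ⁻¹) * w ζ)) (n : ℕ) :
    (T.κ n) ^ 2 = S.κ (n + 1) * S.κ n * (S.φs n).eval α / (S.φs (n + 1)).eval α ∧
    T.r n = (S.φ n).eval α / (S.φs n).eval α ∧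
    T.rb n = ((S.φb n).eval 0 * (S.φs (n + 1)).eval α
                - (S.φb (n + 1)).eval 0 * α * (S.φs n).eval α)
              / (S.κ (n + 1) * (S.φs n).eval α) :=
  elementary_christoffel_conjugate_general w hw S α hα hφsα T n
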